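/- Let K be a field, a, b positive integers with g = gcd(a,b) ≥ 2, let A be a set with {0,g} ⊆ A ⊆ {0,1,…,g} and gcd(A) = 1, and set I = I_A. For k ≥ 1 say that r(I^k) = 1 if (I^k)² = (x^{ka}, y^{kb})·I^k and I^k ≠ (x^{ka}, y^{kb}). Then the following are equivalent: (a) r(I^k) = 1 for some k ≥ 1; (b) {0, 1, g−1, g} ⊆ A; (c) r(I^k) = 1 for every k ≥ max(1, g−2). Moreover (for an arbitrary set A with {0,g} ⊆ A ⊆ {0,1,…,g}, not necessarily with gcd(A) = 1), if r(I_A^{k₀}) = 1 for some k₀ ≥ 1, then r(I_A^k) = 1 for all k ≥ k₀. -/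

import Mathlib

/-!
Put the generator of `I_A` indexed by `i` at the lattice point `(i, g - i)`, so that it is
`x^(i a/g) y^((g-i) b/g)`. Then `I_A^k` and `(x^(ka), y^(kb))` are spanned by monomials whose
points lie on one antidiagonal; such monomials are pairwise non-dividing, so these ideals are
equal iff their sets of points are, and a point is determined by its first coordinate. Thus
`r(I_A^k) = 1` says, for the sumset `kA ⊆ [0, kg]`, that `(2k)A = {0, kg} + kA` and
`kA ≠ {0, kg}`.

The first identity makes the residues of `kA` modulo `kg` closed under addition, hence a subgroup
of `ℤ/kg`; it contains `A`, hence `δ = gcd A`. Adding `δ` repeatedly then shows that `kA` consists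
of all multiples of `δ` in `[0, kg]`, and conversely this description, with `δ < kg`, gives back
`r(I_A^k) = 1`; it passes from `k` to `k + 1` by adding `g`. When `δ = 1`, the elements `1` and
`kg - 1` of `kA` force `1, g - 1 ∈ A`; conversely `0, 1, g - 1, g` give every `n ≤ kg` as
`qg + r·1` or `mg + t(g - 1)` with at most `k` summands once `k ≥ g - 2`.
-/

open MvPolynomial

/-- The monomial `x^c y^d` in `K[x,y]`. -/
noncomputable def mono (K : Type*) [Field K] (c d : ℕ) : MvPolynomial (Fin 2) K :=
  X 0 ^ c * X 1 ^ d

/-- The ideal `J = (x^a, y^b)`. -/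
noncomputable def Jab (K : Type*) [Field K] (a b : ℕ) : Ideal (MvPolynomial (Fin 2) K) :=
  Ideal.span {mono K a 0, mono K 0 b}

/-- For `A ⊆ {0,…,g}` with `g = gcd(a,b)`, the ideal `I_A` generated by the
monomials `x^(i·(a/g)) y^(b − i·(b/g))` for `i ∈ A`. -/
noncomputable def IA (K : Type*) [Field K] (a b : ℕ) (A : Finset ℕ) :
    Ideal (MvPolynomial (Fin 2) K) :=
  Ideal.span ((fun i : ℕ =>
    mono K (i * (a / Nat.gcd a b)) (b - i * (b / Nat.gcd a b))) '' (A : Set ℕ))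
open Pointwise

section MonomialSpan

variable (R : Type*) {σ : Type*} [CommSemiring R]

noncomputable def monomialSpan (S : Set (σ →₀ ℕ)) : Ideal (MvPolynomial σ R) :=
  Ideal.span ((fun s => monomial s 1) '' S)

variable {R}

lemma monomialSpan_add (S T : Set (σ →₀ ℕ)) :
    monomialSpan R (S + T) = monomialSpan R S * monomialSpan R T := by
  rw [monomialSpan, monomialSpan, monomialSpan, Ideal.span_mul_span', ← Set.image2_add,
    ← Set.image2_mul, Set.image_image2, Set.image2_image_left, Set.image2_image_right]
  simp only [monomial_mul, one_mul]

lemma monomialSpan_nsmul (S : Set (σ →₀ ℕ)) (k : ℕ) :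
    monomialSpan R (k • S) = monomialSpan R S ^ k := by
  induction k with
  | zero => simp [monomialSpan, Ideal.one_eq_top]
  | succ k ih => rw [succ_nsmul, pow_succ, monomialSpan_add, ih]

lemma monomialSpan_le_monomialSpan_iff [Nontrivial R] {S T : Set (σ →₀ ℕ)}
    (hST : IsAntichain (· ≤ ·) (S ∪ T)) :
    monomialSpan R S ≤ monomialSpan R T ↔ S ⊆ T := by
  refine ⟨fun h s hs => ?_, fun h => Ideal.span_mono (Set.image_mono h)⟩
  have hmem : monomial s (1 : R) ∈ monomialSpan R T := h (Ideal.subset_span ⟨s, hs, rfl⟩)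
  obtain ⟨t, ht, hts⟩ := mem_ideal_span_monomial_image.mp hmem s
    (by classical rw [support_monomial, if_neg one_ne_zero]; exact Finset.mem_singleton_self s)
  rwa [hST.eq (Or.inr ht) (Or.inl hs) hts] at ht

lemma monomialSpan_inj [Nontrivial R] {U S T : Set (σ →₀ ℕ)} (hU : IsAntichain (· ≤ ·) U)
    (hS : S ⊆ U) (hT : T ⊆ U) : monomialSpan R S = monomialSpan R T ↔ S = T := by
  have hST : IsAntichain (· ≤ ·) (S ∪ T) := hU.subset (Set.union_subset hS hT)
  rw [le_antisymm_iff, monomialSpan_le_monomialSpan_iff hST,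
    monomialSpan_le_monomialSpan_iff (Set.union_comm S T ▸ hST), Set.Subset.antisymm_iff]

end MonomialSpan

section ScaledExponent

noncomputable def scaledExp (α β : ℕ) : ℕ × ℕ →+ (Fin 2 →₀ ℕ) where
  toFun p := Finsupp.single 0 (p.1 * α) + Finsupp.single 1 (p.2 * β)
  map_zero' := by simp
  map_add' p q := by
    simp only [Prod.fst_add, Prod.snd_add, add_mul, Finsupp.single_add]
    abel

variable {α β : ℕ}

lemma scaledExp_le_scaledExp_iff (hα : 0 < α) (hβ : 0 < β) {p q : ℕ × ℕ} :
    scaledExp α β p ≤ scaledExp α β q ↔ p ≤ q := by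
  simp only [scaledExp, AddMonoidHom.coe_mk, ZeroHom.coe_mk, Finsupp.le_def, Fin.forall_fin_two,
    Finsupp.add_apply, Finsupp.single_apply, Prod.le_def]
  simp [Nat.mul_le_mul_right_iff hα, Nat.mul_le_mul_right_iff hβ]

lemma scaledExp_injective (hα : 0 < α) (hβ : 0 < β) : Function.Injective (scaledExp α β) :=
  fun _ _ h => le_antisymm ((scaledExp_le_scaledExp_iff hα hβ).1 h.le)
    ((scaledExp_le_scaledExp_iff hα hβ).1 h.ge)

lemma isAntichain_scaledExp_image_antidiagonal (hα : 0 < α) (hβ : 0 < β) (n : ℕ) :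
    IsAntichain (· ≤ ·) (scaledExp α β '' {p : ℕ × ℕ | p.1 + p.2 = n}) := by
  rintro _ ⟨p, hp, rfl⟩ _ ⟨q, hq, rfl⟩ hne hle
  rw [scaledExp_le_scaledExp_iff hα hβ] at hle
  have := hle.1
  have := hle.2
  exact hne (congrArg _ (Prod.ext (by simp_all; omega) (by simp_all; omega)))

lemma add_subset_antidiagonal {m n : ℕ} {X Y : Set (ℕ × ℕ)}
    (hX : X ⊆ {p : ℕ × ℕ | p.1 + p.2 = m}) (hY : Y ⊆ {p : ℕ × ℕ | p.1 + p.2 = n}) :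
    X + Y ⊆ {p : ℕ × ℕ | p.1 + p.2 = m + n} := by
  rintro _ ⟨p, hp, q, hq, rfl⟩
  have hp' : p.1 + p.2 = m := hX hp
  have hq' : q.1 + q.2 = n := hY hq
  show (p + q).1 + (p + q).2 = m + n
  rw [Prod.fst_add, Prod.snd_add]
  omega

lemma nsmul_subset_antidiagonal {n : ℕ} {X : Set (ℕ × ℕ)} (hX : X ⊆ {p : ℕ × ℕ | p.1 + p.2 = n})
    (k : ℕ) : k • X ⊆ {p : ℕ × ℕ | p.1 + p.2 = k * n} := by
  induction k with
  | zero => simp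
  | succ k ih => rw [succ_nsmul, add_one_mul]; exact add_subset_antidiagonal ih hX

variable {R : Type*} [CommSemiring R] [Nontrivial R]

lemma monomialSpan_scaledExp_image_inj (hα : 0 < α) (hβ : 0 < β) {n : ℕ} {X Y : Set (ℕ × ℕ)}
    (hX : X ⊆ {p : ℕ × ℕ | p.1 + p.2 = n}) (hY : Y ⊆ {p : ℕ × ℕ | p.1 + p.2 = n}) :
    monomialSpan R (scaledExp α β '' X) = monomialSpan R (scaledExp α β '' Y) ↔
      Prod.fst '' X = Prod.fst '' Y := by
  rw [monomialSpan_inj (isAntichain_scaledExp_image_antidiagonal hα hβ n)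
    (Set.image_mono hX) (Set.image_mono hY), (scaledExp_injective hα hβ).image_injective.eq_iff,
    Set.InjOn.image_eq_image_iff (fun p hp q hq h => Prod.ext h (by simp_all; omega)) hX hY]

end ScaledExponent

lemma mono_eq_monomial (K : Type*) [Field K] (c d : ℕ) :
    mono K c d = monomial (Finsupp.single 0 c + Finsupp.single 1 d) 1 := by
  rw [mono, X_pow_eq_monomial, X_pow_eq_monomial, monomial_mul, one_mul]

lemma IA_eq_monomialSpan (K : Type*) [Field K] (a b : ℕ) (A : Finset ℕ) :
    IA K a b A = monomialSpan K (scaledExp (a / Nat.gcd a b) (b / Nat.gcd a b) ''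
      ((fun i => (i, Nat.gcd a b - i)) '' (A : Set ℕ))) := by
  have hb : Nat.gcd a b * (b / Nat.gcd a b) = b := Nat.mul_div_cancel' (Nat.gcd_dvd_right a b)
  rw [IA, monomialSpan, Set.image_image, Set.image_image]
  refine congrArg _ (Set.image_congr fun i _ => ?_)
  have hexp : b - i * (b / Nat.gcd a b) = (Nat.gcd a b - i) * (b / Nat.gcd a b) := by
    rw [Nat.sub_mul, hb]
  rw [mono_eq_monomial, hexp]
  rfl

lemma Jab_mul_eq_monomialSpan (K : Type*) [Field K] (a b k : ℕ) :
    Jab K (k * a) (k * b) = monomialSpan K (scaledExp (a / Nat.gcd a b) (b / Nat.gcd a b) ''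
      {(k * Nat.gcd a b, 0), (0, k * Nat.gcd a b)}) := by
  have ha : Nat.gcd a b * (a / Nat.gcd a b) = a := Nat.mul_div_cancel' (Nat.gcd_dvd_left a b)
  have hb : Nat.gcd a b * (b / Nat.gcd a b) = b := Nat.mul_div_cancel' (Nat.gcd_dvd_right a b)
  rw [Jab, monomialSpan, Set.image_image, Set.image_pair, mono_eq_monomial, mono_eq_monomial]
  simp only [scaledExp, AddMonoidHom.coe_mk, ZeroHom.coe_mk, zero_mul, Finsupp.single_zero,
    add_zero, zero_add, mul_assoc, ha, hb]

/-- `r(I_S^k) = 1`, read off on the exponents of `x`. -/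
def SumsetReductionOne (S : Set ℕ) (g k : ℕ) : Prop :=
  (2 * k) • S = {0, k * g} + k • S ∧ k • S ≠ {0, k * g}

lemma reductionOne_iff_sumsetReductionOne (K : Type*) [Field K] {a b : ℕ} (ha : 0 < a)
    (hb : 0 < b) {A : Finset ℕ} (hA : ∀ i ∈ A, i ≤ Nat.gcd a b) (k : ℕ) :
    ((IA K a b A ^ k) ^ 2 = Jab K (k * a) (k * b) * IA K a b A ^ k ∧
        IA K a b A ^ k ≠ Jab K (k * a) (k * b)) ↔
      SumsetReductionOne A (Nat.gcd a b) k := by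
  set g := Nat.gcd a b
  have hg : 0 < g := Nat.gcd_pos_of_pos_left b ha
  have hα : 0 < a / g := Nat.div_pos (Nat.le_of_dvd ha (Nat.gcd_dvd_left a b)) hg
  have hβ : 0 < b / g := Nat.div_pos (Nat.le_of_dvd hb (Nat.gcd_dvd_right a b)) hg
  rw [IA_eq_monomialSpan, Jab_mul_eq_monomialSpan]
  set L := (fun i => (i, g - i)) '' (A : Set ℕ)
  set J : Set (ℕ × ℕ) := {(k * g, 0), (0, k * g)}
  have hL : L ⊆ {p | p.1 + p.2 = g} := by
    rintro _ ⟨i, hi, rfl⟩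
    exact Nat.add_sub_cancel' (hA i hi)
  have hJ : J ⊆ {p | p.1 + p.2 = k * g} := by
    simp [J, Set.insert_subset_iff]
  have hfstL (m : ℕ) : Prod.fst '' (m • L) = m • (A : Set ℕ) := by
    rw [← AddMonoidHom.coe_fst, Set.image_nsmul, AddMonoidHom.coe_fst, Set.image_image,
      Set.image_id']
  have hfstJL : Prod.fst '' (J + k • L) = {0, k * g} + k • (A : Set ℕ) := by
    rw [← AddMonoidHom.coe_fst, Set.image_add, AddMonoidHom.coe_fst, hfstL, Set.image_pair,
      Set.pair_comm]
  have hfstJ : Prod.fst '' J = {0, k * g} := by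
    rw [Set.image_pair, Set.pair_comm]
  have h2k : k * g + k * g = 2 * k * g := by ring
  rw [← pow_mul, mul_comm k 2,
    ← monomialSpan_nsmul, ← monomialSpan_nsmul, ← monomialSpan_add, ← Set.image_nsmul,
    ← Set.image_nsmul, ← Set.image_add, monomialSpan_scaledExp_image_inj hα hβ
      (nsmul_subset_antidiagonal hL (2 * k)) (h2k ▸ add_subset_antidiagonal hJ
        (nsmul_subset_antidiagonal hL k)),
    Ne, monomialSpan_scaledExp_image_inj hα hβ (nsmul_subset_antidiagonal hL k) hJ,
    hfstJL, hfstL, hfstL, hfstJ]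
  rfl

section Sumset

variable {S : Set ℕ} {g k : ℕ}

lemma nsmul_subset_Iic (hS : ∀ a ∈ S, a ≤ g) (k : ℕ) : k • S ⊆ Set.Iic (k * g) := by
  induction k with
  | zero => simp
  | succ k ih =>
    rw [succ_nsmul, add_one_mul]
    exact (Set.add_subset_add ih hS).trans (Set.Iic_add_Iic_subset _ _)

lemma mul_mem_nsmul {x : ℕ} (hx : x ∈ S) : k * x ∈ k • S :=
  Set.nsmul_mem_nsmul hx

lemma mul_add_mul_mem_nsmul (h0 : 0 ∈ S) {x y i j : ℕ} (hx : x ∈ S) (hy : y ∈ S)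
    (hij : i + j ≤ k) : i * x + j * y ∈ k • S :=
  Set.nsmul_subset_nsmul_right h0 hij
    (add_nsmul S i j ▸ Set.add_mem_add (mul_mem_nsmul hx) (mul_mem_nsmul hy))

lemma one_mem_of_one_mem_nsmul : ∀ {k : ℕ}, 1 ∈ k • S → 1 ∈ S
  | 0, h => absurd h (by simp)
  | k + 1, h => by
    rw [succ_nsmul] at h
    obtain ⟨x, hx, y, hy, hxy : x + y = 1⟩ := h
    obtain rfl | rfl : y = 0 ∨ y = 1 := by omega
    · rw [add_zero] at hxy
      exact one_mem_of_one_mem_nsmul (hxy ▸ hx)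
    · exact hy

lemma sub_one_mem_of_mem_nsmul (hS : ∀ a ∈ S, a ≤ g) {n : ℕ} (hn : n ∈ k • S)
    (h : n + 1 = k * g) : g - 1 ∈ S := by
  induction k generalizing n with
  | zero => simp at h
  | succ k ih =>
    rw [succ_nsmul] at hn
    obtain ⟨x, hx, y, hy, rfl : x + y = n⟩ := hn
    have hxk : x ≤ k * g := nsmul_subset_Iic hS k hx
    rw [add_one_mul] at h
    rcases (hS y hy).lt_or_eq with hlt | rfl
    · obtain rfl : y = g - 1 := by omega
      exact hy
    · exact ih hx (by omega)

lemma Iic_subset_nsmul (hg : 0 < g) (h0 : 0 ∈ S) (h1 : 1 ∈ S) (hg1 : g - 1 ∈ S) (hgS : g ∈ S)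
    (hk : g - 2 ≤ k) : Set.Iic (k * g) ⊆ k • S := by
  intro n (hn : n ≤ k * g)
  obtain ⟨q, r, hr, rfl⟩ : ∃ q r, r < g ∧ q * g + r * 1 = n :=
    ⟨n / g, n % g, Nat.mod_lt n hg, by rw [mul_one, mul_comm]; exact Nat.div_add_mod n g⟩
  have hq : q ≤ k := Nat.le_of_mul_le_mul_right (le_trans (Nat.le_add_right _ _) hn) hg
  by_cases hqr : q + r ≤ k
  · exact mul_add_mul_mem_nsmul h0 hgS h1 hqr
  have hqk : q < k := by
    rcases hq.lt_or_eq with hlt | rfl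
    · exact hlt
    · omega
  -- this uses `(q + r + 1 - g) + (g - r) = q + 1 ≤ k` summands
  have hsplit : q * g + r * 1 = (q + r + 1 - g) * g + (g - r) * (g - 1) := by
    zify [(by omega : g ≤ q + r + 1), hr.le, hg]
    ring
  rw [hsplit]
  exact mul_add_mul_mem_nsmul h0 hgS hg1 (by omega)

lemma add_mem_or_of_nsmul_eq (hred : (2 * k) • S = {0, k * g} + k • S) {s t : ℕ}
    (hs : s ∈ k • S) (ht : t ∈ k • S) : s + t ∈ k • S ∨ ∃ q ∈ k • S, s + t = k * g + q := by
  have hst : s + t ∈ (2 * k) • S := by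
    rw [two_mul, add_nsmul]
    exact Set.add_mem_add hs ht
  rw [hred] at hst
  obtain ⟨p, rfl | rfl, q, hq, hpq : _ + q = s + t⟩ := hst
  · rw [zero_add] at hpq
    exact .inl (hpq ▸ hq)
  · exact .inr ⟨q, hq, hpq.symm⟩

end Sumset

lemma natCast_finset_gcd_mem {G : Type*} [CommRing G] (H : AddSubgroup G) (A : Finset ℕ)
    (hA : ∀ a ∈ A, (a : G) ∈ H) : ((A.gcd id : ℕ) : G) ∈ H := by
  classical
  induction A using Finset.induction_on with
  | empty => simp
  | insert x s _ ih =>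
    have hx := hA x (Finset.mem_insert_self x s)
    have hs := ih fun a ha => hA a (Finset.mem_insert_of_mem ha)
    rw [Finset.gcd_insert, id, gcd_eq_nat_gcd, ← Int.cast_natCast, Nat.gcd_eq_gcd_ab,
      Int.cast_add, Int.cast_mul, Int.cast_mul, Int.cast_natCast, Int.cast_natCast,
      mul_comm, ← zsmul_eq_mul, mul_comm, ← zsmul_eq_mul]
    exact H.add_mem (H.zsmul_mem hx _) (H.zsmul_mem hs _)

section SumsetGcd

variable {A : Finset ℕ} {g k : ℕ}

lemma nsmul_subset_multiples (hA : ∀ a ∈ A, a ≤ g) (k : ℕ) :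
    k • (A : Set ℕ) ⊆ {n | A.gcd id ∣ n ∧ n ≤ k * g} := fun _ hn =>
  ⟨Ideal.mem_span_singleton.1 (AddSubmonoid.nsmul_subset
    (S := (Ideal.span {A.gcd id}).toAddSubmonoid)
    (fun _ ha => Ideal.mem_span_singleton.2 (Finset.gcd_dvd ha)) hn), nsmul_subset_Iic hA k hn⟩

lemma gcd_lt_of_nsmul_ne (h0 : 0 ∈ A) (hgA : g ∈ A) (hA : ∀ a ∈ A, a ≤ g)
    (hne : k • (A : Set ℕ) ≠ {0, k * g}) : A.gcd id < k * g := by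
  by_contra! hle
  refine hne (Set.Subset.antisymm (fun n hn => ?_)
    (Set.insert_subset (Set.zero_mem_nsmul h0) (Set.singleton_subset_iff.2 (mul_mem_nsmul hgA))))
  obtain ⟨⟨c, rfl⟩, hn⟩ := nsmul_subset_multiples hA k hn
  rcases Nat.eq_zero_or_pos (A.gcd id * c) with h | h
  · exact .inl h
  · exact .inr (le_antisymm hn (hle.trans (Nat.le_mul_of_pos_right _ (Nat.pos_of_mul_pos_left h))))

lemma gcd_mem_nsmul (h0 : 0 ∈ A) (hA : ∀ a ∈ A, a ≤ g)
    (hred : (2 * k) • (A : Set ℕ) = {0, k * g} + k • (A : Set ℕ)) (hlt : A.gcd id < k * g) :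
    A.gcd id ∈ k • (A : Set ℕ) := by
  have : NeZero (k * g) := ⟨by omega⟩
  -- the reduction equation makes the residues of `k • A` modulo `k * g` closed under addition
  let R : AddSubmonoid (ZMod (k * g)) :=
    { carrier := Nat.cast '' (k • (A : Set ℕ))
      zero_mem' := ⟨0, Set.zero_mem_nsmul h0, Nat.cast_zero⟩
      add_mem' := by
        rintro _ _ ⟨s, hs, rfl⟩ ⟨t, ht, rfl⟩
        rcases add_mem_or_of_nsmul_eq hred hs ht with hst | ⟨q, hq, hst⟩
        · exact ⟨s + t, hst, Nat.cast_add s t⟩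
        · exact ⟨q, hq, by rw [← Nat.cast_add, hst, Nat.cast_add, ZMod.natCast_self, zero_add]⟩ }
  have hAR : (AddSubgroup.closure (Nat.cast '' (A : Set ℕ) : Set (ZMod (k * g)))).toAddSubmonoid
      ≤ R := by
    rw [AddSubgroup.closure_toAddSubmonoid_of_finite, AddSubmonoid.closure_le]
    rintro _ ⟨a, ha, rfl⟩
    exact ⟨a, Set.subset_nsmul h0 (by rintro rfl; omega) ha, rfl⟩
  obtain ⟨s, hs, hsδ⟩ := hAR
    (natCast_finset_gcd_mem _ A fun a ha => AddSubgroup.subset_closure ⟨a, ha, rfl⟩)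
  rw [ZMod.natCast_eq_natCast_iff', Nat.mod_eq_of_lt hlt] at hsδ
  rcases (Set.mem_Iic.1 (nsmul_subset_Iic hA k hs)).lt_or_eq with hsk | rfl
  · rwa [← hsδ, Nat.mod_eq_of_lt hsk]
  · rw [← hsδ, Nat.mod_self]
    exact Set.zero_mem_nsmul h0

lemma multiples_subset_nsmul (h0 : 0 ∈ A) (hgA : g ∈ A)
    (hred : (2 * k) • (A : Set ℕ) = {0, k * g} + k • (A : Set ℕ))
    (hδ : A.gcd id ∈ k • (A : Set ℕ)) :
    {n | A.gcd id ∣ n ∧ n ≤ k * g} ⊆ k • (A : Set ℕ) := by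
  rintro _ ⟨⟨c, rfl⟩, hc⟩
  induction c with
  | zero => simp [Set.zero_mem_nsmul h0]
  | succ c ih =>
    rw [mul_add_one] at hc ⊢
    rcases add_mem_or_of_nsmul_eq hred (ih (by omega)) hδ with h | ⟨q, hq, hcq⟩
    · exact h
    · obtain rfl : q = 0 := by omega
      rw [hcq, add_zero]
      exact mul_mem_nsmul hgA

theorem sumsetReductionOne_iff (h0 : 0 ∈ A) (hgA : g ∈ A) (hA : ∀ a ∈ A, a ≤ g) :
    SumsetReductionOne A g k ↔
      k • (A : Set ℕ) = {n | A.gcd id ∣ n ∧ n ≤ k * g} ∧ A.gcd id < k * g := by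
  constructor
  · rintro ⟨hred, hne⟩
    have hlt := gcd_lt_of_nsmul_ne h0 hgA hA hne
    exact ⟨(nsmul_subset_multiples hA k).antisymm
      (multiples_subset_nsmul h0 hgA hred (gcd_mem_nsmul h0 hA hred hlt)), hlt⟩
  rintro ⟨hfull, hlt⟩
  have hmem {n : ℕ} (hn : A.gcd id ∣ n) (hnk : n ≤ k * g) : n ∈ k • (A : Set ℕ) :=
    hfull ▸ ⟨hn, hnk⟩
  have hδg : A.gcd id ∣ g := Finset.gcd_dvd hgA
  refine ⟨Set.Subset.antisymm (fun n hn => ?_) ?_, fun h => ?_⟩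
  · obtain ⟨hδn, hn⟩ := nsmul_subset_multiples hA (2 * k) hn
    rcases le_or_gt n (k * g) with hnk | hnk
    · exact ⟨0, .inl rfl, n, hmem hδn hnk, zero_add n⟩
    · refine ⟨k * g, .inr rfl, n - k * g, hmem (Nat.dvd_sub hδn (hδg.mul_left k)) ?_, ?_⟩
      · rw [mul_assoc, two_mul] at hn; omega
      · show k * g + (n - k * g) = n; omega
  · rintro _ ⟨p, rfl | rfl, q, hq, rfl⟩
    · show 0 + q ∈ _
      rw [zero_add]
      exact Set.nsmul_subset_nsmul_right h0 (by omega : k ≤ 2 * k) hq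
    · rw [two_mul, add_nsmul]
      exact Set.add_mem_add (mul_mem_nsmul hgA) hq
  · have hδ : A.gcd id ∈ ({0, k * g} : Set ℕ) := h ▸ hmem dvd_rfl hlt.le
    have hg : g ≠ 0 := by rintro rfl; omega
    rcases hδ with hδ | hδ
    · exact hg (Nat.eq_zero_of_zero_dvd (hδ ▸ hδg))
    · exact hlt.ne hδ

lemma succ_nsmul_eq_multiples (h0 : 0 ∈ A) (hgA : g ∈ A) (hA : ∀ a ∈ A, a ≤ g) (hk : 1 ≤ k)
    (hfull : k • (A : Set ℕ) = {n | A.gcd id ∣ n ∧ n ≤ k * g}) :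
    (k + 1) • (A : Set ℕ) = {n | A.gcd id ∣ n ∧ n ≤ (k + 1) * g} := by
  refine (nsmul_subset_multiples hA (k + 1)).antisymm fun n ⟨hδn, hn⟩ => ?_
  rcases le_or_gt n (k * g) with hnk | hnk
  · exact Set.nsmul_subset_nsmul_right h0 k.le_succ (hfull ▸ ⟨hδn, hnk⟩)
  · have hgk : g ≤ k * g := Nat.le_mul_of_pos_left g hk
    rw [add_one_mul] at hn
    rw [succ_nsmul, ← Nat.sub_add_cancel (hgk.trans hnk.le)]
    exact Set.add_mem_add (hfull ▸ ⟨Nat.dvd_sub hδn (Finset.gcd_dvd hgA), by omega⟩) hgA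

lemma SumsetReductionOne.mono (h0 : 0 ∈ A) (hgA : g ∈ A) (hA : ∀ a ∈ A, a ≤ g) {k₀ : ℕ}
    (h : SumsetReductionOne A g k₀) (hk : k₀ ≤ k) : SumsetReductionOne A g k := by
  have hk₀ : 1 ≤ k₀ := Nat.one_le_iff_ne_zero.2 fun h₀ => h.2 (by
    rw [h₀, zero_nsmul, zero_mul, Set.pair_eq_singleton, Set.singleton_zero])
  rw [sumsetReductionOne_iff h0 hgA hA] at h ⊢
  induction k, hk using Nat.le_induction with
  | base => exact h
  | succ k hk ih =>
    exact ⟨succ_nsmul_eq_multiples h0 hgA hA (hk₀.trans hk) ih.1,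
      ih.2.trans_le (Nat.mul_le_mul_right g k.le_succ)⟩

lemma subset_of_sumsetReductionOne (h0 : 0 ∈ A) (hgA : g ∈ A) (hA : ∀ a ∈ A, a ≤ g)
    (hδ : A.gcd id = 1) (h : SumsetReductionOne A g k) : {0, 1, g - 1, g} ⊆ A := by
  obtain ⟨hfull, hlt⟩ := (sumsetReductionOne_iff h0 hgA hA).1 h
  rw [hδ] at hfull hlt
  have hmem {n : ℕ} (hn : n ≤ k * g) : n ∈ k • (A : Set ℕ) := hfull ▸ ⟨one_dvd n, hn⟩
  have h1 : 1 ∈ A := one_mem_of_one_mem_nsmul (hmem hlt.le)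
  have hg1 : g - 1 ∈ A := sub_one_mem_of_mem_nsmul hA (hmem (Nat.sub_le (k * g) 1)) (by omega)
  simp [Finset.insert_subset_iff, h0, h1, hg1, hgA]

lemma sumsetReductionOne_of_subset (hg : 2 ≤ g) (hA : ∀ a ∈ A, a ≤ g)
    (hsub : {0, 1, g - 1, g} ⊆ A) (hk : max 1 (g - 2) ≤ k) : SumsetReductionOne A g k := by
  simp only [Finset.insert_subset_iff, Finset.singleton_subset_iff] at hsub
  obtain ⟨h0, h1, hg1, hgA⟩ := hsub
  have hδ : A.gcd id ≤ 1 := Nat.le_of_dvd one_pos (Finset.gcd_dvd h1)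
  rw [max_le_iff] at hk
  refine (sumsetReductionOne_iff h0 hgA hA).2 ⟨(nsmul_subset_multiples hA k).antisymm
    fun n hn => Iic_subset_nsmul (by omega) h0 h1 hg1 hgA hk.2 hn.2, ?_⟩
  nlinarith

end SumsetGcd

theorem stmt17 (K : Type*) [Field K] (a b : ℕ) (ha : 0 < a) (hb : 0 < b)
    (hg : 2 ≤ Nat.gcd a b) (A : Finset ℕ)
    (hA1 : ({0, Nat.gcd a b} : Finset ℕ) ⊆ A)
    (hA2 : A ⊆ Finset.range (Nat.gcd a b + 1)) :
    let g := Nat.gcd a b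
    -- `P k` says: the reduction number of `I_A^k` with respect to
    -- `(x^{ka}, y^{kb})` equals `1`.
    let P : ℕ → Prop := fun k =>
      (IA K a b A ^ k) ^ 2 = Jab K (k * a) (k * b) * IA K a b A ^ k ∧
        IA K a b A ^ k ≠ Jab K (k * a) (k * b)
    (A.gcd id = 1 →
      ((∃ k, 1 ≤ k ∧ P k) ↔ ({0, 1, g - 1, g} : Finset ℕ) ⊆ A)
      ∧ ((∃ k, 1 ≤ k ∧ P k) ↔ ∀ k, max 1 (g - 2) ≤ k → P k))
    ∧ ∀ k₀ k : ℕ, 1 ≤ k₀ → k₀ ≤ k → P k₀ → P k := by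
  intro g P
  have hA : ∀ i ∈ A, i ≤ g := fun i hi => Nat.lt_succ_iff.1 (Finset.mem_range.1 (hA2 hi))
  have h0 : 0 ∈ A := hA1 (by simp)
  have hgA : g ∈ A := hA1 (by simp [g])
  have hP (k : ℕ) : P k ↔ SumsetReductionOne A g k :=
    reductionOne_iff_sumsetReductionOne K ha hb hA k
  simp only [hP]
  refine ⟨fun hδ => ?_, fun k₀ k _ hk h => h.mono h0 hgA hA hk⟩
  have hsub : (∃ k, 1 ≤ k ∧ SumsetReductionOne A g k) → {0, 1, g - 1, g} ⊆ A :=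
    fun ⟨_, _, h⟩ => subset_of_sumsetReductionOne h0 hgA hA hδ h
  have hall : {0, 1, g - 1, g} ⊆ A → ∀ k, max 1 (g - 2) ≤ k → SumsetReductionOne A g k :=
    fun h _ => sumsetReductionOne_of_subset hg hA h
  have hex : (∀ k, max 1 (g - 2) ≤ k → SumsetReductionOne A g k) →
      ∃ k, 1 ≤ k ∧ SumsetReductionOne A g k :=
    fun h => ⟨_, le_max_left _ _, h _ le_rfl⟩
  exact ⟨⟨hsub, hex ∘ hall⟩, hall ∘ hsub, hex⟩
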